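/- arXiv:2006.12662 — 4 statements merged into one kernel-verified Lean document; each statement's English description precedes it below -/
import Mathlib

section
/- (Lemma 5.1, first inequality.) Let R : E' → E'_i have homogeneous type s with degree n = Σ_j s_j, and suppose ‖R(w)‖ ≤ C for all w ∈ E' with ‖w‖ ≤ 1. Then for every v ∈ E with ‖v‖ ≤ 1, ‖F_i^{-1}(R(F(v)))‖ ≤ e^{−χ_i + Σ_j s_j χ_j + (n+1)ε} · C. -/
/-- A map `R` from a product of real vector spaces to a real vector space has
homogeneous type `s = (s 0, …, s (ℓ-1))` if scaling the `j`-th component by `a j`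
multiplies the value by `∏ j, (a j) ^ (s j)`. -/
def HomogType {ℓ : ℕ} {E : Fin ℓ → Type*} [∀ j, AddCommGroup (E j)] [∀ j, Module ℝ (E j)]
    {V : Type*} [AddCommGroup V] [Module ℝ V]
    (s : Fin ℓ → ℕ) (R : (∀ j, E j) → V) : Prop :=
  ∀ (a : Fin ℓ → ℝ) (w : ∀ j, E j), R (fun j => a j • w j) = (∏ j, a j ^ s j) • R w

/-! Dividing the `j`-th component of `F v` by `e^{χ j + ε}` brings it back into the unit ball,
so homogeneity bounds `‖R (F v)‖` by `∏ j, e^{s j (χ j + ε)} C`; the lower bound on `F i`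
makes `F i⁻¹` cost at most a further factor `e^{-(χ i - ε)}`. -/

open Finset

theorem PiLp.norm_le_norm_of_forall_norm_le {p : ENNReal} (hp : 0 < p.toReal)
    {ι : Type*} [Fintype ι] {β γ : ι → Type*}
    [∀ i, SeminormedAddCommGroup (β i)] [∀ i, SeminormedAddCommGroup (γ i)]
    {x : PiLp p β} {y : PiLp p γ} (h : ∀ i, ‖x i‖ ≤ ‖y i‖) : ‖x‖ ≤ ‖y‖ := by
  rw [PiLp.norm_eq_sum hp, PiLp.norm_eq_sum hp]
  gcongr with i
  exact h i

theorem LinearEquiv.norm_symm_le_of_mul_norm_le {R E F : Type*} [Semiring R]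
    [SeminormedAddCommGroup E] [SeminormedAddCommGroup F] [Module R E] [Module R F]
    (e : E ≃ₗ[R] F) {c : ℝ} (hc : 0 < c) (h : ∀ u, c * ‖u‖ ≤ ‖e u‖) (x : F) :
    ‖e.symm x‖ ≤ c⁻¹ * ‖x‖ :=
  (le_inv_mul_iff₀ hc).2 (by simpa using h (e.symm x))

theorem HomogType.norm_le_prod_pow_mul {ℓ : ℕ} {E : Fin ℓ → Type*}
    [∀ j, SeminormedAddCommGroup (E j)] [∀ j, NormedSpace ℝ (E j)]
    {V : Type*} [SeminormedAddCommGroup V] [NormedSpace ℝ V]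
    {s : Fin ℓ → ℕ} {R : PiLp 2 E → V} (hR : HomogType s (fun w => R (WithLp.toLp 2 w)))
    {C : ℝ} (hC : ∀ w : PiLp 2 E, ‖w‖ ≤ 1 → ‖R w‖ ≤ C)
    {a : Fin ℓ → ℝ} (ha : ∀ j, 0 < a j) {w : PiLp 2 E}
    (hw : ‖WithLp.toLp 2 (fun j => (a j)⁻¹ • w j)‖ ≤ 1) :
    ‖R w‖ ≤ (∏ j, a j ^ s j) * C := by
  have hscale : R w = (∏ j, a j ^ s j) • R (WithLp.toLp 2 fun j => (a j)⁻¹ • w j) := by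
    convert hR a (fun j => (a j)⁻¹ • w j) using 2
    ext j
    simp [smul_smul, (ha j).ne']
  have hprod : 0 ≤ ∏ j, a j ^ s j := prod_nonneg fun j _ => pow_nonneg (ha j).le _
  rw [hscale, norm_smul, Real.norm_of_nonneg hprod]
  exact mul_le_mul_of_nonneg_left (hC _ hw) hprod

theorem norm_conj_le_of_homogType_general
    {ℓ : ℕ} (χ : Fin (ℓ + 1) → ℝ)
    (E E' : Fin (ℓ + 1) → Type*)
    [∀ j, NormedAddCommGroup (E j)] [∀ j, NormedSpace ℝ (E j)]
    [∀ j, NormedAddCommGroup (E' j)] [∀ j, NormedSpace ℝ (E' j)]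
    (ε : ℝ)
    (F : ∀ j, E j ≃ₗ[ℝ] E' j)
    (hF : ∀ j, ∀ u : E j,
      Real.exp (χ j - ε) * ‖u‖ ≤ ‖F j u‖ ∧ ‖F j u‖ ≤ Real.exp (χ j + ε) * ‖u‖)
    (i : Fin (ℓ + 1)) (s : Fin (ℓ + 1) → ℕ)
    (R : PiLp 2 E' → E' i) (hR : HomogType s (fun w => R (WithLp.toLp 2 w)))
    (C : ℝ) (hC : ∀ w : PiLp 2 E', ‖w‖ ≤ 1 → ‖R w‖ ≤ C) :
    ∀ v : PiLp 2 E, ‖v‖ ≤ 1 →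
      ‖(F i).symm (R (WithLp.toLp 2 (fun j => F j (v j))))‖ ≤
        Real.exp (-χ i + (∑ j, (s j : ℝ) * χ j) + (((∑ j, s j : ℕ) : ℝ) + 1) * ε) * C := by
  intro v hv
  set a : Fin (ℓ + 1) → ℝ := fun j => Real.exp (χ j + ε)
  have hrescaled : ‖WithLp.toLp 2 (fun j => (a j)⁻¹ • F j (v j))‖ ≤ 1 := by
    refine (PiLp.norm_le_norm_of_forall_norm_le (by norm_num) fun j => ?_).trans hv
    rw [PiLp.toLp_apply, norm_smul, norm_inv, Real.norm_of_nonneg (Real.exp_pos _).le]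
    exact inv_mul_le_of_le_mul₀ (Real.exp_pos _).le (norm_nonneg _) (hF j (v j)).2
  calc ‖(F i).symm (R (WithLp.toLp 2 (fun j => F j (v j))))‖
      ≤ (Real.exp (χ i - ε))⁻¹ * ‖R (WithLp.toLp 2 (fun j => F j (v j)))‖ :=
        (F i).norm_symm_le_of_mul_norm_le (Real.exp_pos _) (fun u => (hF i u).1) _
    _ ≤ (Real.exp (χ i - ε))⁻¹ * ((∏ j, a j ^ s j) * C) := by
        gcongr
        exact hR.norm_le_prod_pow_mul hC (fun j => Real.exp_pos _) hrescaled
    _ = Real.exp (-χ i + (∑ j, (s j : ℝ) * χ j) + (((∑ j, s j : ℕ) : ℝ) + 1) * ε) * C := by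
        simp only [a, ← Real.exp_nat_mul, ← Real.exp_sum, ← Real.exp_neg, ← mul_assoc,
          ← Real.exp_add]
        push_cast
        simp only [mul_add, sum_add_distrib, ← sum_mul]
        ring_nf

/-- Lemma 5.1, first inequality: for `R : E' → E'ᵢ` of homogeneous type `s` bounded by `C`
on the unit ball, `‖Fᵢ⁻¹ (R (F v))‖ ≤ e^{-χ i + ∑ s j • χ j + (n+1) ε} C` on the unit ball,
where `n = ∑ j, s j`. -/
theorem norm_conj_le_of_homogType
    {ℓ : ℕ} (χ : Fin (ℓ + 1) → ℝ) (hmono : StrictMono χ) (hneg : ∀ j, χ j < 0)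
    (E E' : Fin (ℓ + 1) → Type*)
    [∀ j, NormedAddCommGroup (E j)] [∀ j, NormedSpace ℝ (E j)]
    [∀ j, NormedAddCommGroup (E' j)] [∀ j, NormedSpace ℝ (E' j)]
    (ε : ℝ) (hε : 0 < ε)
    (F : ∀ j, E j ≃ₗ[ℝ] E' j)
    (hF : ∀ j, ∀ u : E j,
      Real.exp (χ j - ε) * ‖u‖ ≤ ‖F j u‖ ∧ ‖F j u‖ ≤ Real.exp (χ j + ε) * ‖u‖)
    (i : Fin (ℓ + 1)) (s : Fin (ℓ + 1) → ℕ)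
    (R : PiLp 2 E' → E' i) (hR : HomogType s (fun w => R (WithLp.toLp 2 w)))
    (C : ℝ) (hC : ∀ w : PiLp 2 E', ‖w‖ ≤ 1 → ‖R w‖ ≤ C) :
    ∀ v : PiLp 2 E, ‖v‖ ≤ 1 →
      ‖(F i).symm (R (WithLp.toLp 2 (fun j => F j (v j))))‖ ≤
        Real.exp (-χ i + (∑ j, (s j : ℝ) * χ j) + (((∑ j, s j : ℕ) : ℝ) + 1) * ε) * C :=
  norm_conj_le_of_homogType_general χ E E' ε F hF i s R hR C hC
end

section
/- Let E and F be real Banach spaces, N ∈ ℕ with N ≥ 1, r > 0, and let f : E → F be N times continuously differentiable on the open ball B(0,r) with iteratedFDeriv of every order k = 0,1,…,N vanishing at 0. Let t ∈ B(0,r) and suppose M ≥ 0 is such that ‖D^{(N)}_s f‖ ≤ M for every s with ‖s‖ ≤ ‖t‖. Then for every n with 0 ≤ n ≤ N, ‖D^{(n)}_t f‖ ≤ ‖t‖^{N−n} · M. -/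
/-- Mean value estimate (5.15): if `f` is `C^N` on the ball `B(0,r)` with all derivatives
up to order `N` vanishing at `0`, and the `N`-th derivative is bounded by `M` on the ball
of radius `‖t‖`, then `‖D^(n) f t‖ ≤ ‖t‖^(N-n) * M` for every `n ≤ N`. -/
theorem iteratedFDeriv_le_of_jet_vanishes
    {E F : Type*} [NormedAddCommGroup E] [NormedSpace ℝ E] [CompleteSpace E]
    [NormedAddCommGroup F] [NormedSpace ℝ F] [CompleteSpace F]
    (N : ℕ) (hN : 1 ≤ N) (r : ℝ) (hr : 0 < r) (f : E → F)
    (hf : ContDiffOn ℝ N f (Metric.ball 0 r))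
    (h0 : ∀ k ≤ N, iteratedFDeriv ℝ k f 0 = 0)
    (t : E) (ht : t ∈ Metric.ball (0 : E) r)
    (M : ℝ) (hM : 0 ≤ M)
    (hbound : ∀ s : E, ‖s‖ ≤ ‖t‖ → ‖iteratedFDeriv ℝ N f s‖ ≤ M) :
    ∀ n ≤ N, ‖iteratedFDeriv ℝ n f t‖ ≤ ‖t‖ ^ (N - n) * M := by
  have htr : ‖t‖ < r := by simpa [Metric.mem_ball] using ht
  have ht0 : (0 : ℝ) ≤ ‖t‖ := norm_nonneg t
  -- key claim by induction on k
  have key : ∀ k, k ≤ N → ∀ s : E, ‖s‖ ≤ ‖t‖ →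
      ‖iteratedFDeriv ℝ (N - k) f s‖ ≤ ‖s‖ ^ k * M := by
    intro k
    induction k with
    | zero =>
      intro _ s hs
      simpa using hbound s hs
    | succ k ih =>
      intro hk s hs
      have hkN : k ≤ N := Nat.le_of_succ_le hk
      set n := N - (k + 1) with hn
      have hn1 : n + 1 = N - k := by omega
      have hnN : n ≤ N := Nat.sub_le _ _
      -- differentiability of the n-th iterated derivative on the ball
      have hdiff : ∀ x ∈ Metric.ball (0 : E) r,
          DifferentiableAt ℝ (iteratedFDeriv ℝ n f) x := by
        intro x hx
        have h1 : DifferentiableOn ℝ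
            (iteratedFDerivWithin ℝ n f (Metric.ball (0 : E) r)) (Metric.ball (0 : E) r) :=
          hf.differentiableOn_iteratedFDerivWithin
            (by exact_mod_cast lt_of_lt_of_le (by omega : n < N) le_rfl)
            (Metric.isOpen_ball.uniqueDiffOn)
        have h2 : DifferentiableOn ℝ (iteratedFDeriv ℝ n f) (Metric.ball (0 : E) r) := by
          refine h1.congr fun y hy => ?_
          exact (iteratedFDerivWithin_of_isOpen n Metric.isOpen_ball hy).symm
        exact (h2.differentiableAt (Metric.isOpen_ball.mem_nhds hx))
      -- mean value on the closed ball of radius ‖s‖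
      have hsub : Metric.closedBall (0 : E) ‖s‖ ⊆ Metric.ball (0 : E) r := by
        apply Metric.closedBall_subset_ball
        exact lt_of_le_of_lt hs htr
      have hmvt := (convex_closedBall (0 : E) ‖s‖).norm_image_sub_le_of_norm_hasFDerivWithin_le
        (f := iteratedFDeriv ℝ n f) (f' := fun x => fderiv ℝ (iteratedFDeriv ℝ n f) x)
        (C := ‖s‖ ^ k * M)
        (fun x hx => ((hdiff x (hsub hx)).hasFDerivAt).hasFDerivWithinAt)
        (fun x hx => by
          have hxs : ‖x‖ ≤ ‖s‖ := by simpa using Metric.mem_closedBall.1 hx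
          have := ih hkN x (le_trans hxs hs)
          rw [norm_fderiv_iteratedFDeriv, hn1]
          calc ‖iteratedFDeriv ℝ (N - k) f x‖ ≤ ‖x‖ ^ k * M := this
            _ ≤ ‖s‖ ^ k * M :=
              mul_le_mul_of_nonneg_right (pow_le_pow_left₀ (norm_nonneg x) hxs k) hM)
        (show (0:E) ∈ Metric.closedBall (0:E) ‖s‖ from
          Metric.mem_closedBall_self (norm_nonneg s))
        (show s ∈ Metric.closedBall (0:E) ‖s‖ from
          Metric.mem_closedBall.2 (by simp))
      have h00 : iteratedFDeriv ℝ n f 0 = 0 := h0 n hnN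
      calc ‖iteratedFDeriv ℝ n f s‖
          = ‖iteratedFDeriv ℝ n f s - iteratedFDeriv ℝ n f 0‖ := by rw [h00]; simp
        _ ≤ ‖s‖ ^ k * M * ‖s - 0‖ := hmvt
        _ = ‖s‖ ^ (k + 1) * M := by rw [sub_zero]; ring
  intro n hn
  have := key (N - n) (Nat.sub_le _ _) t le_rfl
  rwa [Nat.sub_sub_self hn] at this
end

section
/- Let E and F be real Banach spaces, N ∈ ℕ with N ≥ 1, 0 < α ≤ 1, r > 0, and let f : E → F be N times continuously differentiable on the open ball B(0,r) with iteratedFDeriv of every order k = 0,1,…,N vanishing at 0. Suppose H ≥ 0 is such that ‖D^{(N)}_s f‖ ≤ H·‖s‖^α for all s ∈ B(0,r). Then for every n with 0 ≤ n ≤ N and every t ∈ B(0,r), ‖D^{(n)}_t f‖ ≤ H·‖t‖^{N−n+α}; in particular, if r ≤ 1 then for every n < N, ‖D^{(n)}_t f‖ ≤ H·‖t‖^{1+α}. -/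
/-- Estimate (5.16)–(5.17): if `f` is `C^N` on the ball `B(0,r)` with all derivatives up to
order `N` vanishing at `0`, and the `N`-th derivative satisfies the `α`-Hölder bound
`‖D^(N) f s‖ ≤ H ‖s‖^α` on the ball, then `‖D^(n) f t‖ ≤ H ‖t‖^(N-n+α)` for `n ≤ N` and
`t` in the ball; in particular, if `r ≤ 1`, then `‖D^(n) f t‖ ≤ H ‖t‖^(1+α)` for `n < N`. -/
theorem iteratedFDeriv_le_of_jet_vanishes_holder
    {E F : Type*} [NormedAddCommGroup E] [NormedSpace ℝ E] [CompleteSpace E]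
    [NormedAddCommGroup F] [NormedSpace ℝ F] [CompleteSpace F]
    (N : ℕ) (hN : 1 ≤ N) (α : ℝ) (hα0 : 0 < α) (hα1 : α ≤ 1)
    (r : ℝ) (hr : 0 < r) (f : E → F)
    (hf : ContDiffOn ℝ N f (Metric.ball 0 r))
    (h0 : ∀ k ≤ N, iteratedFDeriv ℝ k f 0 = 0)
    (H : ℝ) (hH : 0 ≤ H)
    (hbound : ∀ s ∈ Metric.ball (0 : E) r, ‖iteratedFDeriv ℝ N f s‖ ≤ H * ‖s‖ ^ α) :
    (∀ n ≤ N, ∀ t ∈ Metric.ball (0 : E) r,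
        ‖iteratedFDeriv ℝ n f t‖ ≤ H * ‖t‖ ^ ((N : ℝ) - (n : ℝ) + α)) ∧
      (r ≤ 1 → ∀ n < N, ∀ t ∈ Metric.ball (0 : E) r,
        ‖iteratedFDeriv ℝ n f t‖ ≤ H * ‖t‖ ^ (1 + α)) := by
  -- Differentiability of the iterated derivatives on the ball
  have hdiff : ∀ n < N, ∀ x ∈ Metric.ball (0 : E) r,
      DifferentiableAt ℝ (iteratedFDeriv ℝ n f) x := by
    intro n hn x hx
    have h1 : DifferentiableWithinAt ℝ (iteratedFDerivWithin ℝ n f (Metric.ball 0 r))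
        (Metric.ball 0 r) x :=
      hf.differentiableOn_iteratedFDerivWithin (by exact_mod_cast hn)
        (Metric.isOpen_ball.uniqueDiffOn) x hx
    have h2 : DifferentiableAt ℝ (iteratedFDerivWithin ℝ n f (Metric.ball 0 r)) x :=
      h1.differentiableAt (Metric.isOpen_ball.mem_nhds hx)
    refine h2.congr_of_eventuallyEq ?_
    filter_upwards [Metric.isOpen_ball.mem_nhds hx] with y hy
    exact (iteratedFDerivWithin_of_isOpen n Metric.isOpen_ball hy).symm
  -- Main downward induction
  have main : ∀ k, ∀ n ≤ N, N - k ≤ n → ∀ t ∈ Metric.ball (0 : E) r,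
      ‖iteratedFDeriv ℝ n f t‖ ≤ H * ‖t‖ ^ ((N : ℝ) - (n : ℝ) + α) := by
    intro k
    induction k with
    | zero =>
      intro n hn hn' t ht
      have : n = N := le_antisymm hn (by simpa using hn')
      subst this
      simpa using hbound t ht
    | succ k ih =>
      intro n hn hn' t ht
      rcases eq_or_lt_of_le hn with rfl | hnN
      · simpa using hbound t ht
      -- n < N; use the bound for n+1
      have hn1 : n + 1 ≤ N := hnN
      have hb1 : ∀ s ∈ Metric.ball (0 : E) r,
          ‖iteratedFDeriv ℝ (n + 1) f s‖ ≤ H * ‖s‖ ^ ((N : ℝ) - (n + 1 : ℕ) + α) := by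
        intro s hs
        exact ih (n + 1) hn1 (by omega) s hs
      set β : ℝ := (N : ℝ) - (n + 1 : ℕ) + α with hβ
      have hβ0 : 0 ≤ β := by
        have : (n + 1 : ℝ) ≤ (N : ℝ) := by exact_mod_cast hn1
        simp only [hβ]
        push_cast
        linarith
      rcases eq_or_ne t 0 with rfl | ht0
      · rw [h0 n hn]
        have hpos : (0:ℝ) < (N : ℝ) - (n : ℝ) + α := by
          have : (n:ℝ) ≤ N := by exact_mod_cast hn
          linarith
        simp only [norm_zero, norm_zero]
        rw [Real.zero_rpow (ne_of_gt hpos)]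
        simp
      have htpos : 0 < ‖t‖ := norm_pos_iff.2 ht0
      have htr : ‖t‖ < r := by simpa [Metric.mem_ball] using ht
      have hsub : Metric.closedBall (0 : E) ‖t‖ ⊆ Metric.ball 0 r := by
        intro x hx
        simp only [Metric.mem_closedBall, dist_zero_right] at hx
        simp only [Metric.mem_ball, dist_zero_right]
        exact lt_of_le_of_lt hx htr
      have hmvt := (convex_closedBall (0 : E) ‖t‖).norm_image_sub_le_of_norm_hasFDerivWithin_le
        (f := iteratedFDeriv ℝ n f) (f' := fun x => fderiv ℝ (iteratedFDeriv ℝ n f) x)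
        (C := H * ‖t‖ ^ β)
        (fun x hx => ((hdiff n hnN x (hsub hx)).hasFDerivAt).hasFDerivWithinAt)
        (fun x hx => by
          rw [norm_fderiv_iteratedFDeriv]
          refine le_trans (hb1 x (hsub hx)) ?_
          have hx' : ‖x‖ ≤ ‖t‖ := by
            simpa [Metric.mem_closedBall, dist_zero_right] using hx
          exact mul_le_mul_of_nonneg_left
            (Real.rpow_le_rpow (norm_nonneg x) hx' hβ0) hH)
        (show (0:E) ∈ Metric.closedBall (0:E) ‖t‖ from
          Metric.mem_closedBall_self (norm_nonneg t))
        (show t ∈ Metric.closedBall (0:E) ‖t‖ by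
          simp [Metric.mem_closedBall, dist_zero_right])
      rw [h0 n hn, sub_zero, sub_zero] at hmvt
      calc ‖iteratedFDeriv ℝ n f t‖ ≤ H * ‖t‖ ^ β * ‖t‖ := hmvt
        _ = H * ‖t‖ ^ ((N : ℝ) - (n : ℝ) + α) := by
            rw [mul_assoc, ← Real.rpow_add_one (ne_of_gt htpos)]
            congr 1
            push_cast [hβ]
            ring_nf
  have part1 : ∀ n ≤ N, ∀ t ∈ Metric.ball (0 : E) r,
      ‖iteratedFDeriv ℝ n f t‖ ≤ H * ‖t‖ ^ ((N : ℝ) - (n : ℝ) + α) :=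
    fun n hn t ht => main N n hn (by omega) t ht
  refine ⟨part1, fun hr1 n hn t ht => ?_⟩
  refine le_trans (part1 n hn.le t ht) (mul_le_mul_of_nonneg_left ?_ hH)
  rcases eq_or_ne t 0 with rfl | ht0
  · have hpos : (0:ℝ) < (N : ℝ) - (n : ℝ) + α := by
      have : (n:ℝ) ≤ N := by exact_mod_cast hn.le
      linarith
    simp only [norm_zero]
    rw [Real.zero_rpow (ne_of_gt hpos), Real.zero_rpow (by positivity)]
  · have htpos : 0 < ‖t‖ := norm_pos_iff.2 ht0
    have ht1 : ‖t‖ ≤ 1 := le_trans (le_of_lt (by simpa [Metric.mem_ball] using ht)) hr1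
    apply Real.rpow_le_rpow_of_exponent_ge htpos ht1
    have : (n : ℝ) + 1 ≤ (N : ℝ) := by exact_mod_cast hn
    linarith
end

section
/- Let X be a compact metric space, f : X → X a homeomorphism, and B a real Banach space. Let A : X → (B →L[ℝ] B) be a continuous map with operator norms ‖A(x)‖ ≤ k for all x ∈ X, where 0 ≤ k < 1, and let Q : X → B be continuous. Then there exists a unique continuous map H : X → B satisfying H(x) = A(x)(H(f(x))) + Q(x) for all x ∈ X, and it is given by the uniformly convergent series H(x) = Σ_{m=0}^∞ (A(x) ∘ A(f(x)) ∘ ⋯ ∘ A(f^{m−1}(x)))(Q(f^m(x))) (the m = 0 term being Q(x)). -/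
/-!
Since `‖A x‖ ≤ k`, the `m`-th term of the orbit series is bounded by `k ^ m ‖Q‖∞`, so by the
Weierstrass M-test the series converges uniformly to a continuous `H`; shifting the index by one
turns the series at `x` into `Q x` plus `A x` applied to the series at `f x`, which is the
invariance equation. The difference `G` of two continuous solutions satisfies
`‖G x‖ ≤ k ‖G (f x)‖`, hence `‖G x‖ ≤ k ^ n ‖G‖∞ → 0`.
-/

open Filter Topology

/-- The `m`-th term of the series defining the unique continuous invariant section:
`(A x ∘ A (f x) ∘ ⋯ ∘ A (f^(m-1) x)) (Q (f^m x))`, the `m = 0` term being `Q x`. -/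
def orbitSeriesTerm {X : Type*} {B : Type*} [NormedAddCommGroup B] [NormedSpace ℝ B]
    (f : X → X) (A : X → B →L[ℝ] B) (Q : X → B) (m : ℕ) (x : X) : B :=
  (((List.range m).map fun j => A (f^[j] x)).prod) (Q (f^[m] x))

theorem eq_zero_of_norm_le_mul_norm_comp {X E : Type*} [NormedAddCommGroup E] (f : X → X)
    {G : X → E} {k M : ℝ} (hk0 : 0 ≤ k) (hk1 : k < 1) (hM : ∀ x, ‖G x‖ ≤ M)
    (hG : ∀ x, ‖G x‖ ≤ k * ‖G (f x)‖) : G = 0 := by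
  have hpow : ∀ n x, ‖G x‖ ≤ k ^ n * M := by
    intro n
    induction n with
    | zero => simpa using hM
    | succ n ih =>
      intro x
      calc ‖G x‖ ≤ k * ‖G (f x)‖ := hG x
        _ ≤ k * (k ^ n * M) := by gcongr; exact ih (f x)
        _ = k ^ (n + 1) * M := by ring
  have hlim : Tendsto (fun n : ℕ => k ^ n * M) atTop (𝓝 0) := by
    simpa using (tendsto_pow_atTop_nhds_zero_of_lt_one hk0 hk1).mul_const M
  funext x
  exact norm_le_zero_iff.mp (ge_of_tendsto' hlim fun n => hpow n x)

namespace orbitSeriesTerm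

variable {X B : Type*} [NormedAddCommGroup B] [NormedSpace ℝ B]
  (f : X → X) (A : X → B →L[ℝ] B) (Q : X → B)

@[simp]
theorem zero_apply (x : X) : orbitSeriesTerm f A Q 0 x = Q x := by
  simp [orbitSeriesTerm]

theorem succ_apply (m : ℕ) (x : X) :
    orbitSeriesTerm f A Q (m + 1) x = A x (orbitSeriesTerm f A Q m (f x)) := by
  simp only [orbitSeriesTerm, List.range_succ_eq_map, List.map_cons, List.prod_cons,
    List.map_map, Function.comp_def, Function.iterate_succ_apply, Function.iterate_zero_apply,
    mul_apply_eq_comp]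

variable {f A Q}

theorem norm_le {k C : ℝ} (hk0 : 0 ≤ k) (hAk : ∀ x, ‖A x‖ ≤ k) (hQC : ∀ x, ‖Q x‖ ≤ C)
    (m : ℕ) (x : X) : ‖orbitSeriesTerm f A Q m x‖ ≤ k ^ m * C := by
  induction m generalizing x with
  | zero => simpa using hQC x
  | succ m ih =>
    rw [succ_apply]
    calc ‖A x (orbitSeriesTerm f A Q m (f x))‖
        ≤ ‖A x‖ * ‖orbitSeriesTerm f A Q m (f x)‖ := (A x).le_opNorm _
      _ ≤ k * (k ^ m * C) := mul_le_mul (hAk x) (ih (f x)) (norm_nonneg _) hk0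
      _ = k ^ (m + 1) * C := by ring

theorem continuous [TopologicalSpace X] (hf : Continuous f) (hA : Continuous A)
    (hQ : Continuous Q) (m : ℕ) : Continuous (orbitSeriesTerm f A Q m) := by
  induction m with
  | zero => exact hQ.congr fun x => (zero_apply f A Q x).symm
  | succ m ih => exact (hA.clm_apply (ih.comp hf)).congr fun x => (succ_apply f A Q m x).symm

theorem eq_apply_comp_add_of_hasSum {H : X → B}
    (hH : ∀ x, HasSum (fun m => orbitSeriesTerm f A Q m x) (H x)) (x : X) :
    H x = A x (H (f x)) + Q x := by
  have hshift : HasSum (fun m => orbitSeriesTerm f A Q (m + 1) x) (A x (H (f x))) := by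
    simpa only [succ_apply] using (A x).hasSum (hH (f x))
  simpa using (hH x).unique ((hasSum_nat_add_iff 1).mp hshift)

end orbitSeriesTerm

/-- Abstract fixed-point statement behind the unique continuous invariant section (5.9):
for a continuous family of operators `A x` with `‖A x‖ ≤ k < 1` and continuous `Q`,
there is a unique continuous `H` with `H x = A x (H (f x)) + Q x`, given by the uniformly
convergent series `H x = ∑ m, (A x ∘ ⋯ ∘ A (f^(m-1) x)) (Q (f^m x))`. -/
theorem exists_unique_continuous_invariant_section
    {X : Type*} [MetricSpace X] [CompactSpace X] (f : X ≃ₜ X)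
    {B : Type*} [NormedAddCommGroup B] [NormedSpace ℝ B] [CompleteSpace B]
    (A : X → B →L[ℝ] B) (hA : Continuous A)
    (k : ℝ) (hk0 : 0 ≤ k) (hk1 : k < 1) (hAk : ∀ x, ‖A x‖ ≤ k)
    (Q : X → B) (hQ : Continuous Q) :
    ∃ H : X → B, Continuous H ∧ (∀ x, H x = A x (H (f x)) + Q x) ∧
      (∀ x, HasSum (fun m => orbitSeriesTerm (⇑f) A Q m x) (H x)) ∧
      TendstoUniformly
        (fun n x => ∑ m ∈ Finset.range n, orbitSeriesTerm (⇑f) A Q m x) H Filter.atTop ∧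
      (∀ H' : X → B, Continuous H' → (∀ x, H' x = A x (H' (f x)) + Q x) → H' = H) := by
  let Q' : C(X, B) := ⟨Q, hQ⟩
  have hbound := orbitSeriesTerm.norm_le (f := f) hk0 hAk Q'.norm_coe_le_norm
  have hgeom := (summable_geometric_of_lt_one hk0 hk1).mul_right ‖Q'‖
  set H : X → B := fun x => ∑' m, orbitSeriesTerm f A Q m x
  have hsum : ∀ x, HasSum (fun m => orbitSeriesTerm f A Q m x) (H x) := fun x =>
    (hgeom.of_norm_bounded fun m => hbound m x).hasSum
  have hunif := tendstoUniformly_tsum_nat hgeom hbound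
  have hcont : Continuous H := hunif.continuous <| .of_forall fun n =>
    continuous_finsetSum _ fun m _ => orbitSeriesTerm.continuous f.continuous hA hQ m
  have heq := orbitSeriesTerm.eq_apply_comp_add_of_hasSum hsum
  refine ⟨H, hcont, heq, hsum, hunif, fun H' hH'c hH'eq => ?_⟩
  set G : C(X, B) := ⟨H' - H, hH'c.sub hcont⟩
  have hG : ∀ x, ‖G x‖ ≤ k * ‖G (f x)‖ := fun x => by
    calc ‖G x‖ = ‖A x (G (f x))‖ := by
          simp only [G, ContinuousMap.coe_mk, Pi.sub_apply, map_sub]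
          rw [hH'eq x, heq x, add_sub_add_right_eq_sub]
      _ ≤ ‖A x‖ * ‖G (f x)‖ := (A x).le_opNorm _
      _ ≤ k * ‖G (f x)‖ := by gcongr; exact hAk x
  exact sub_eq_zero.mp (eq_zero_of_norm_le_mul_norm_comp f hk0 hk1 G.norm_coe_le_norm hG)
end
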